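/- Let p, q be relatively prime positive integers, {F_n} the (p,q)-Fibonacci sequence and {L_n} the (p,q)-Lucas sequence, and let a, d be positive integers and n ≥ 3. Set d_i = L_{a + (i−1)·d} for 1 ≤ i ≤ n. Then d_3 belongs to the semigroup ℕd_1 + ℕd_2 if and only if d is odd or F_{2d} ≥ lcm(d_1, F_d). Moreover, if d_3 ∈ ℕd_1 + ℕd_2, then d_i ∈ ℕd_1 + ℕd_2 for every i with 3 ≤ i ≤ n. -/

import Mathlib

open MvPolynomial

/-- The `(p,q)`-Fibonacci sequence: `F 0 = 0`, `F 1 = 1`, `F (n+2) = p * F (n+1) + q * F n`. -/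
def pqFib (p q : ℕ) : ℕ → ℕ
  | 0 => 0
  | 1 => 1
  | n + 2 => p * pqFib p q (n + 1) + q * pqFib p q n

/-- The `(p,q)`-Lucas sequence: `L 0 = 2`, `L 1 = p`, `L (n+2) = p * L (n+1) + q * L n`. -/
def pqLucas (p q : ℕ) : ℕ → ℕ
  | 0 => 2
  | 1 => p
  | n + 2 => p * pqLucas p q (n + 1) + q * pqLucas p q n

/-- The toric ideal of the affine monomial curve `t ↦ (t^{d 0}, …, t^{d (n-1)})`:
the kernel of the `k`-algebra map `k[x_1,…,x_n] → k[t]`, `x_i ↦ t^{d i}`. -/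
noncomputable def toricIdeal (k : Type*) [Field k] {n : ℕ} (d : Fin n → ℕ) :
    Ideal (MvPolynomial (Fin n) k) :=
  RingHom.ker (MvPolynomial.aeval
    (fun i : Fin n => (Polynomial.X : Polynomial k) ^ d i)).toRingHom

/-- The toric ideal `I_A` is a complete intersection iff it can be generated by
`n - 1` elements. -/
def IsCI (k : Type*) [Field k] {n : ℕ} (d : Fin n → ℕ) : Prop :=
  ∃ g : Fin (n - 1) → MvPolynomial (Fin n) k,
    Ideal.span (Set.range g) = toricIdeal k d

/-- The toric ideal of the projective monomial curve: the kernel of the `k`-algebra map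
`k[x_1,…,x_{n+1}] → k[t,u]`, `x_i ↦ t^{d i} u^{D - d i}` for `i ≤ n` and
`x_{n+1} ↦ u^D`, where `D = max A`. -/
noncomputable def projToricIdeal (k : Type*) [Field k] {n : ℕ} (d : Fin n → ℕ) :
    Ideal (MvPolynomial (Fin (n + 1)) k) :=
  RingHom.ker (MvPolynomial.aeval (fun i : Fin (n + 1) =>
    if h : (i : ℕ) < n then
      (X 0 : MvPolynomial (Fin 2) k) ^ d ⟨i, h⟩ *
        (X 1 : MvPolynomial (Fin 2) k) ^ (Finset.univ.sup d - d ⟨i, h⟩)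
    else (X 1 : MvPolynomial (Fin 2) k) ^ (Finset.univ.sup d))).toRingHom

/-- The projective toric ideal `I_{A*}` is a complete intersection iff it can be
generated by `n - 1` elements. -/
def ProjIsCI (k : Type*) [Field k] {n : ℕ} (d : Fin n → ℕ) : Prop :=
  ∃ g : Fin (n - 1) → MvPolynomial (Fin (n + 1)) k,
    Ideal.span (Set.range g) = projToricIdeal k d

/-- `d 0 < d 1 < ⋯` is a generalized arithmetic sequence: there are positive
integers `h, e` with `d i = h * d 0 + i * e` for every `i ≥ 1`. -/
def IsGenArith {n : ℕ} (d : Fin n → ℕ) : Prop :=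
  ∃ h e : ℕ, 0 < h ∧ 0 < e ∧
    ∀ i : Fin n, 0 < (i : ℕ) → d i = h * d ⟨0, i.pos⟩ + (i : ℕ) * e

/-- `d 0 < d 1 < ⋯` is an increasing arithmetic sequence: there is a positive
integer `e` with `d i = d 0 + i * e` for every `i`. -/
def IsArithFn {n : ℕ} (d : Fin n → ℕ) : Prop :=
  ∃ e : ℕ, 0 < e ∧ ∀ i : Fin n, 0 < (i : ℕ) → d i = d ⟨0, i.pos⟩ + (i : ℕ) * e

/-- `A = {d 0, …, d (n-1)}` minimally generates the numerical semigroup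
`ℕ d 0 + ⋯ + ℕ d (n-1)`: no `d i` lies in the subsemigroup generated by the rest. -/
def MinimallyGenerates {n : ℕ} (d : Fin n → ℕ) : Prop :=
  ∀ i : Fin n, ¬ ∃ α : Fin n → ℕ, α i = 0 ∧ d i = ∑ j, α j * d j

/-
The Lucas numbers satisfy `L d * L (m + d) = L (m + 2d) + (-q)^d * L m`. For odd `d` this writes
every `L (a + k d)` as a nonnegative combination of the two preceding ones, so all of them lie in
`ℕ L a + ℕ L (a + d)`. For even `d` it reads `d₃ + q^d d₁ = L d * d₂`; the solutions of
`α d₁ + β d₂ = L d * d₂ - q^d d₁` are `(t d₂/g - q^d, L d - t d₁/g)` with `g = gcd(d₁, d₂)`, and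
since `q^d d₁ ≤ d₃` a nonnegative one exists iff `d₁/g ≤ L d`. As `g = gcd(L a, F d)`,
`lcm(d₁, F d) = (d₁/g) F d` and `F (2d) = F d * L d`, this is the lcm criterion. Finally `g`
divides every `d_i`, and for `i ≥ 4` one has `d_i ≥ L d * d₂ ≥ (d₁/g) d₂`, so `d_i / g` is past
the Frobenius number of the coprime pair `d₁/g, d₂/g`.
-/

theorem exists_eq_mul_add_mul_of_rec {x : ℕ → ℕ} {A B : ℕ}
    (hx : ∀ k, x (k + 2) = A * x (k + 1) + B * x k) (k : ℕ) :
    ∃ α β : ℕ, x k = α * x 0 + β * x 1 := by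
  induction k using Nat.twoStepInduction with
  | zero => exact ⟨1, 0, by ring⟩
  | one => exact ⟨0, 1, by ring⟩
  | more k ih₀ ih₁ =>
    obtain ⟨α₀, β₀, h₀⟩ := ih₀
    obtain ⟨α₁, β₁, h₁⟩ := ih₁
    exact ⟨A * α₁ + B * α₀, A * β₁ + B * β₀, by rw [hx, h₀, h₁]; ring⟩

theorem exists_eq_mul_add_mul_of_gcd_dvd {m n N : ℕ} (hm : 0 < m) (hN : m.gcd n ∣ N)
    (hle : m / m.gcd n * n ≤ N) : ∃ α β : ℕ, N = α * m + β * n := by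
  have hg : 0 < m.gcd n := Nat.gcd_pos_of_pos_left n hm
  obtain ⟨l, n', hcop, hl, hn'⟩ := Nat.exists_coprime m n
  rw [Nat.div_eq_of_eq_mul_left hg hl] at hle
  generalize m.gcd n = g at *
  subst hl hn'
  obtain ⟨N', rfl⟩ := hN
  have hle' : l * n' ≤ N' :=
    Nat.le_of_mul_le_mul_left (by linarith) hg
  obtain ⟨α, β, h⟩ := Nat.exists_add_mul_eq_of_gcd_dvd_of_mul_pred_le l n' N'
    (by rw [hcop.gcd_eq_one]; exact one_dvd _)
    ((Nat.mul_le_mul (Nat.pred_le l) (Nat.pred_le n')).trans hle')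
  exact ⟨α, β, by rw [← h]; ring⟩

theorem exists_eq_mul_add_mul_of_le_mul {m n N e c t : ℕ} (hg : 0 < m.gcd n)
    (hN : N + e * m = c * n) (ht : e ≤ t * (n / m.gcd n)) (htc : m / m.gcd n * t ≤ c) :
    ∃ α β : ℕ, N = α * m + β * n := by
  obtain ⟨l, n', -, hl, hn'⟩ := Nat.exists_coprime m n
  rw [Nat.div_eq_of_eq_mul_left hg hl] at htc
  rw [Nat.div_eq_of_eq_mul_left hg hn'] at ht
  generalize m.gcd n = g at *
  subst hl hn'
  obtain ⟨α, hα⟩ := Nat.exists_eq_add_of_le ht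
  obtain ⟨β, hβ⟩ := Nat.exists_eq_add_of_le htc
  refine ⟨α, β, Nat.add_right_cancel (m := e * (l * g)) ?_⟩
  rw [hN, hβ]
  linear_combination (l * g) * hα

theorem exists_eq_mul_add_mul_of_div_gcd_le {m n N e c : ℕ} (hn : 0 < n)
    (hN : N + e * m = c * n) (he : e * m ≤ N) (hc : m / m.gcd n ≤ c) :
    ∃ α β : ℕ, N = α * m + β * n := by
  have hg : 0 < m.gcd n := Nat.gcd_pos_of_pos_right m hn
  set n' := n / m.gcd n
  have hn' : 0 < n' := Nat.div_pos (Nat.gcd_le_right m hn) hg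
  by_cases hen : e ≤ n'
  · exact exists_eq_mul_add_mul_of_le_mul (t := 1) hg hN (by simpa) (by simpa)
  obtain ⟨t, ht⟩ : ∃ t, e ≤ t * n' ∧ t * n' ≤ 2 * e := by
    push Not at hen
    have := Nat.div_add_mod e n'
    have := Nat.mod_lt e hn'
    refine ⟨e / n' + 1, ?_⟩
    rw [add_one_mul, mul_comm]
    constructor <;> linarith [Nat.zero_le (e % n')]
  refine exists_eq_mul_add_mul_of_le_mul hg hN ht.1 (Nat.le_of_mul_le_mul_right ?_ hn)
  have hcomm : m / m.gcd n * n = m * n' := by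
    rw [Nat.div_mul_right_comm (Nat.gcd_dvd_left m n), Nat.mul_div_assoc _ (Nat.gcd_dvd_right m n)]
  calc m / m.gcd n * t * n = t * n' * m := by rw [mul_right_comm, hcomm]; ring
    _ ≤ 2 * e * m := Nat.mul_le_mul_right m ht.2
    _ ≤ c * n := by linarith

theorem div_gcd_le_of_eq_mul_add_mul {m n N e c α β : ℕ} (hm : 0 < m) (he : 0 < e)
    (hN : N + e * m = c * n) (hrep : N = α * m + β * n) : m / m.gcd n ≤ c := by
  have hg : 0 < m.gcd n := Nat.gcd_pos_of_pos_left n hm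
  obtain ⟨l, n', hcop, hl, hn'⟩ := Nat.exists_coprime m n
  rw [Nat.div_eq_of_eq_mul_left hg hl]
  generalize m.gcd n = g at *
  subst hl hn' hrep
  have hβc : β < c := by
    by_contra! h
    nlinarith [Nat.mul_le_mul_right (n' * g) h, Nat.mul_pos he hm]
  obtain ⟨s, rfl⟩ := Nat.exists_eq_add_of_lt hβc
  have hs : (α + e) * l = (s + 1) * n' :=
    Nat.eq_of_mul_eq_mul_right hg (by linear_combination hN)
  have hls : l ∣ s + 1 := hcop.dvd_of_dvd_mul_right ⟨α + e, by rw [← hs]; ring⟩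
  have := Nat.le_of_dvd s.succ_pos hls
  omega

theorem exists_eq_mul_add_mul_iff {m n N e c : ℕ} (hm : 0 < m) (hn : 0 < n) (he₀ : 0 < e)
    (hN : N + e * m = c * n) (he : e * m ≤ N) :
    (∃ α β : ℕ, N = α * m + β * n) ↔ m / m.gcd n ≤ c :=
  ⟨fun ⟨_, _, hrep⟩ => div_gcd_le_of_eq_mul_add_mul hm he₀ hN hrep,
    exists_eq_mul_add_mul_of_div_gcd_le hn hN he⟩

section PQSequences

variable {p q : ℕ}

local notation "F" => pqFib p q
local notation "L" => pqLucas p q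

theorem pqFib_add_two (n : ℕ) : F (n + 2) = p * F (n + 1) + q * F n := rfl

theorem pqLucas_add_two (n : ℕ) : L (n + 2) = p * L (n + 1) + q * L n := rfl

theorem apply_add_add_one_of_rec {s : ℕ → ℕ} (hs : ∀ n, s (n + 2) = p * s (n + 1) + q * s n)
    (m n : ℕ) : s (m + n + 1) = s (m + 1) * F (n + 1) + q * s m * F n := by
  induction n using Nat.twoStepInduction with
  | zero => simp [pqFib]
  | one => simp only [hs, pqFib, mul_one, mul_zero, add_zero, Nat.add_right_cancel_iff]; ring
  | more n ih₀ ih₁ =>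
    rw [show m + (n + 2) + 1 = m + n + 1 + 2 by ring, hs,
      show m + n + 1 + 1 = m + (n + 1) + 1 by ring, ih₀, ih₁, pqFib_add_two (n + 1),
      pqFib_add_two n]
    ring

theorem pqFib_add_add_one (m n : ℕ) : F (m + n + 1) = F (m + 1) * F (n + 1) + q * F m * F n :=
  apply_add_add_one_of_rec pqFib_add_two m n

theorem pqLucas_add_add_one (m n : ℕ) : L (m + n + 1) = L (m + 1) * F (n + 1) + q * L m * F n :=
  apply_add_add_one_of_rec pqLucas_add_two m n

theorem pqLucas_add_one (n : ℕ) : L (n + 1) = F (n + 2) + q * F n := by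
  rw [pqFib_add_two, ← zero_add n, pqLucas_add_add_one]
  simp only [pqLucas, zero_add]
  ring

theorem pqFib_two_mul (d : ℕ) : F (2 * d) = F d * L d := by
  cases d with
  | zero => rfl
  | succ e =>
    rw [show 2 * (e + 1) = e + 1 + e + 1 by ring, pqFib_add_add_one, pqLucas_add_one]
    ring

theorem pqFib_le_succ (hp : 0 < p) (n : ℕ) : F n ≤ F (n + 1) := by
  cases n with
  | zero => exact Nat.zero_le _
  | succ n =>
    rw [pqFib_add_two]
    nlinarith [Nat.zero_le (q * F n)]

theorem pqFib_mono (hp : 0 < p) : Monotone F :=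
  monotone_nat_of_le_succ (pqFib_le_succ hp)

theorem pqFib_pos (hp : 0 < p) {n : ℕ} (hn : 0 < n) : 0 < F n :=
  Nat.one_pos.trans_le (pqFib_mono hp hn)

theorem pqLucas_pos (hp : 0 < p) (n : ℕ) : 0 < L n := by
  cases n with
  | zero => exact Nat.two_pos
  | succ n =>
    rw [pqLucas_add_one]
    exact Nat.add_pos_left (pqFib_pos hp (Nat.succ_pos _)) _

theorem pqLucas_le_pqFib_two_mul_add_one (hp : 0 < p) {d : ℕ} (hd : 0 < d) :
    L d ≤ F (2 * d + 1) := by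
  obtain ⟨e, rfl⟩ : ∃ e, d = e + 1 := ⟨d - 1, by omega⟩
  rw [pqLucas_add_one, show 2 * (e + 1) + 1 = (e + 1) + (e + 1) + 1 by ring,
    pqFib_add_add_one (e + 1) (e + 1), mul_assoc]
  exact Nat.add_le_add (Nat.le_mul_self _)
    (Nat.mul_le_mul_left q ((pqFib_le_succ hp e).trans (Nat.le_mul_self _)))

theorem pqLucas_mul_pqFib_le (m n : ℕ) : L (m + 1) * F (n + 1) ≤ L (m + n + 1) := by
  rw [pqLucas_add_add_one]
  exact Nat.le_add_right _ _

theorem pqLucas_mul_le (hp : 0 < p) {a d k : ℕ} (hd : 0 < d) (hk : 3 ≤ k) :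
    L d * L (a + d) ≤ L (a + k * d) := by
  obtain ⟨e, rfl⟩ : ∃ e, d = e + 1 := ⟨d - 1, by omega⟩
  obtain ⟨j, rfl⟩ : ∃ j, k = j + 3 := ⟨k - 3, by omega⟩
  calc L (e + 1) * L (a + (e + 1))
      ≤ F ((j + 2) * (e + 1) + 1) * L (a + e + 1) := by
        refine Nat.mul_le_mul ((pqLucas_le_pqFib_two_mul_add_one hp hd).trans ?_) le_rfl
        exact pqFib_mono hp (by nlinarith)
    _ ≤ L (a + (j + 3) * (e + 1)) := by
        rw [mul_comm, show a + (j + 3) * (e + 1) = (a + e) + (j + 2) * (e + 1) + 1 by ring]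
        exact pqLucas_mul_pqFib_le _ _

theorem pqLucas_mul_pqLucas_add (d m : ℕ) :
    (L d : ℤ) * L (m + d) = L (m + 2 * d) + (-q : ℤ) ^ d * L m := by
  have hL : ∀ n, (L (n + 2) : ℤ) = p * L (n + 1) + q * L n := fun n => by
    rw [pqLucas_add_two]; push_cast; ring
  induction d using Nat.twoStepInduction generalizing m with
  | zero => simp only [pqLucas, Nat.cast_ofNat, add_zero, mul_zero, pow_zero, one_mul]; ring
  | one => simp [pqLucas]
  | more d ih₀ ih₁ =>
    rw [hL d, add_mul, mul_assoc, mul_assoc, show m + (d + 2) = m + 1 + (d + 1) by ring, ih₁,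
      show m + 1 + (d + 1) = m + 2 + d by ring, ih₀,
      show m + 2 * (d + 2) = m + 2 * d + 2 + 2 by ring,
      show m + 1 + 2 * (d + 1) = m + 2 * d + 2 + 1 by ring,
      show m + 2 + 2 * d = m + 2 * d + 2 by ring, hL (m + 2 * d + 2), hL m]
    ring

theorem pqLucas_add_two_mul_of_odd {d : ℕ} (hd : Odd d) (m : ℕ) :
    L (m + 2 * d) = L d * L (m + d) + q ^ d * L m := by
  have h := pqLucas_mul_pqLucas_add (p := p) (q := q) d m
  rw [hd.neg_pow] at h
  exact_mod_cast (by linear_combination -h : (L (m + 2 * d) : ℤ) = L d * L (m + d) + q ^ d * L m)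

theorem pqLucas_add_two_mul_of_even {d : ℕ} (hd : Even d) (m : ℕ) :
    L (m + 2 * d) + q ^ d * L m = L d * L (m + d) := by
  have h := pqLucas_mul_pqLucas_add (p := p) (q := q) d m
  rw [hd.neg_pow] at h
  exact_mod_cast h.symm

theorem dvd_pqLucas_add_mul {x m d : ℕ} (h₀ : x ∣ L m) (h₁ : x ∣ L (m + d)) (k : ℕ) :
    x ∣ L (m + k * d) := by
  induction k using Nat.twoStepInduction with
  | zero => simpa using h₀
  | one => simpa using h₁
  | more k ih₀ ih₁ =>
    have h := pqLucas_mul_pqLucas_add (p := p) (q := q) d (m + k * d)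
    rw [show m + k * d + d = m + (k + 1) * d by ring,
      show m + k * d + 2 * d = m + (k + 2) * d by ring] at h
    rw [← Int.natCast_dvd_natCast] at ih₀ ih₁ ⊢
    rw [eq_sub_of_add_eq h.symm]
    exact dvd_sub (dvd_mul_of_dvd_right ih₁ _) (dvd_mul_of_dvd_right ih₀ _)

theorem pow_mul_pqLucas_le (j m : ℕ) : q ^ j * L m ≤ L (m + 2 * j) := by
  induction j with
  | zero => simp
  | succ j ih =>
    rw [show m + 2 * (j + 1) = m + 2 * j + 2 by ring, pqLucas_add_two, pow_succ', mul_assoc]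
    exact le_add_left (Nat.mul_le_mul_left q ih)

theorem coprime_pqLucas_of_coprime (hpq : p.Coprime q) {n : ℕ} (hn : 0 < n) :
    (L n).Coprime q := by
  induction n using Nat.twoStepInduction with
  | zero => omega
  | one => exact hpq
  | more n _ ih₁ =>
    rw [pqLucas_add_two]
    exact (Nat.coprime_add_mul_left_left _ q _).mpr (hpq.mul_left (ih₁ n.succ_pos))

theorem gcd_pqLucas_pqLucas_add_one (hpq : p.Coprime q) (n : ℕ) :
    (L n).gcd (L (n + 1)) = Nat.gcd 2 p := by
  induction n with
  | zero => rfl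
  | succ n ih =>
    have hc : q.Coprime (L (n + 1)) := (coprime_pqLucas_of_coprime hpq n.succ_pos).symm
    rw [pqLucas_add_two, show p * L (n + 1) + q * L n = q * L n + L (n + 1) * p by ring,
      Nat.gcd_add_mul_left_right, hc.gcd_mul_left_cancel_right, Nat.gcd_comm, ih]

theorem dvd_pqFib_two_mul (j : ℕ) : p ∣ F (2 * j) := by
  induction j with
  | zero => exact dvd_zero p
  | succ j ih =>
    rw [show 2 * (j + 1) = 2 * j + 2 by ring, pqFib_add_two]
    exact dvd_add (dvd_mul_right p _) (dvd_mul_of_dvd_right ih q)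

theorem pqLucas_two_mul_mod_four_and_exists_odd (hp₂ : 2 ∣ p) (hq : Odd q) (k : ℕ) :
    L (2 * k) % 4 = 2 ∧ ∃ m, Odd m ∧ L (2 * k + 1) = p * m := by
  induction k with
  | zero => exact ⟨rfl, 1, odd_one, (mul_one p).symm⟩
  | succ k ih =>
    obtain ⟨h₄, m, hm, hLm⟩ := ih
    obtain ⟨p', hp'⟩ := hp₂
    obtain ⟨j, hj⟩ := hq
    obtain ⟨t, ht⟩ : ∃ t, L (2 * k) = 4 * t + 2 := ⟨L (2 * k) / 4, by omega⟩
    have h₄' : L (2 * (k + 1)) = 4 * (p' * p' * m + 2 * j * t + j + t) + 2 := by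
      rw [show 2 * (k + 1) = 2 * k + 2 by ring, pqLucas_add_two, hLm, ht, hp', hj]
      ring
    refine ⟨by omega, L (2 * (k + 1)) + q * m, ?_, ?_⟩
    · exact Even.add_odd (Nat.even_iff.mpr (by omega)) (Odd.mul (hj ▸ odd_two_mul_add_one j) hm)
    · rw [show 2 * (k + 1) + 1 = 2 * k + 1 + 2 by ring, pqLucas_add_two, hLm,
        show 2 * k + 1 + 1 = 2 * (k + 1) by ring]
      ring

theorem odd_pqLucas_div_gcd_pqFib (hp : 0 < p) (hp₂ : 2 ∣ p) (hq : Odd q) {d : ℕ}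
    (hd : Even d) (a : ℕ) : Odd (L a / (L a).gcd (F d)) := by
  have hpF : p ∣ F d := by
    obtain ⟨j, rfl⟩ := hd
    exact two_mul j ▸ dvd_pqFib_two_mul j
  have hLa := Nat.mul_div_cancel' (Nat.gcd_dvd_left (L a) (F d))
  rcases Nat.even_or_odd a with ⟨j, rfl⟩ | ⟨j, rfl⟩
  · -- `L a ≡ 2 (mod 4)` while the gcd is even, so the cofactor must be odd
    have h₄ := (pqLucas_two_mul_mod_four_and_exists_odd hp₂ hq j).1
    rw [← two_mul] at hLa ⊢
    have hg : 2 ∣ (L (2 * j)).gcd (F d) := Nat.dvd_gcd (by omega) (hp₂.trans hpF)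
    by_contra hl
    have := Nat.mul_dvd_mul hg (even_iff_two_dvd.mp (Nat.not_odd_iff_even.mp hl))
    rw [hLa] at this
    omega
  · -- `L a = p * m` with `m` odd, and `p` divides the gcd, so the cofactor divides `m`
    obtain ⟨m, hm, hLm⟩ := (pqLucas_two_mul_mod_four_and_exists_odd hp₂ hq j).2
    set g := (L (2 * j + 1)).gcd (F d)
    set l := L (2 * j + 1) / g
    obtain ⟨r, hr⟩ : p ∣ g := Nat.dvd_gcd ⟨m, hLm⟩ hpF
    refine hm.of_dvd_nat ⟨r, Nat.eq_of_mul_eq_mul_left hp ?_⟩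
    rw [← hLm, ← hLa, hr]
    ring

theorem coprime_pqLucas_div_gcd_pqFib (hp : 0 < p) (hpq : p.Coprime q) {d : ℕ} (hd : Even d)
    (a : ℕ) : (L a / (L a).gcd (F d)).Coprime (L (a + 1)) := by
  have h : (L a / (L a).gcd (F d)).gcd (L (a + 1)) ∣ Nat.gcd 2 p := by
    rw [← gcd_pqLucas_pqLucas_add_one hpq a]
    exact Nat.gcd_dvd_gcd_of_dvd_left _ (Nat.div_dvd_of_dvd (Nat.gcd_dvd_left _ _))
  rcases Nat.even_or_odd p with hpe | hpo
  · have hq : Odd q := (hpq.coprime_dvd_left hpe.two_dvd).odd_of_left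
    have hodd := (odd_pqLucas_div_gcd_pqFib hp hpe.two_dvd hq hd a).of_dvd_nat
      (Nat.gcd_dvd_left _ (L (a + 1)))
    rcases (Nat.dvd_prime Nat.prime_two).mp (h.trans (Nat.gcd_dvd_left 2 p)) with h1 | h2
    · exact h1
    · rw [h2] at hodd
      exact absurd hodd (by decide)
  · rw [Nat.coprime_two_left.mpr hpo] at h
    exact Nat.dvd_one.mp h

theorem gcd_pqLucas_add_eq_gcd_pqFib (hp : 0 < p) (hpq : p.Coprime q) {d : ℕ} (hd : Even d)
    (hd₀ : 0 < d) (a : ℕ) : (L a).gcd (L (a + d)) = (L a).gcd (F d) := by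
  obtain ⟨e, rfl⟩ : ∃ e, d = e + 1 := ⟨d - 1, by omega⟩
  rw [← add_assoc, pqLucas_add_add_one, show q * L a * F e = q * F e * L a by ring,
    Nat.gcd_add_mul_right_right]
  set g := (L a).gcd (F (e + 1))
  have hg : 0 < g := Nat.gcd_pos_of_pos_left _ (pqLucas_pos hp a)
  have hl := coprime_pqLucas_div_gcd_pqFib hp hpq hd a
  have hlf : (L a / g).Coprime (F (e + 1) / g) := Nat.coprime_div_gcd_div_gcd hg
  calc (L a).gcd (L (a + 1) * F (e + 1))
      = (g * (L a / g)).gcd (g * (L (a + 1) * (F (e + 1) / g))) := by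
        rw [Nat.mul_div_cancel' (Nat.gcd_dvd_left _ _), mul_left_comm,
          Nat.mul_div_cancel' (Nat.gcd_dvd_right _ _)]
    _ = g := by rw [Nat.gcd_mul_left, Nat.Coprime.gcd_eq_one (hl.mul_right hlf), mul_one]

theorem lcm_pqLucas_pqFib_le_iff (hp : 0 < p) {d : ℕ} (hd : 0 < d) (a : ℕ) :
    (L a).lcm (F d) ≤ F (2 * d) ↔ L a / (L a).gcd (F d) ≤ L d := by
  rw [Nat.lcm_eq_mul_div, ← Nat.div_mul_right_comm (Nat.gcd_dvd_left _ _), pqFib_two_mul,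
    mul_comm (F d), Nat.mul_le_mul_right_iff (pqFib_pos hp hd)]

theorem exists_pqLucas_add_mul_of_odd {d : ℕ} (hd : Odd d) (a k : ℕ) :
    ∃ α β : ℕ, L (a + k * d) = α * L a + β * L (a + d) := by
  have hrec (k : ℕ) :
      L (a + (k + 2) * d) = L d * L (a + (k + 1) * d) + q ^ d * L (a + k * d) := by
    rw [show a + (k + 2) * d = a + k * d + 2 * d by ring, pqLucas_add_two_mul_of_odd hd,
      show a + k * d + d = a + (k + 1) * d by ring]
  simpa using exists_eq_mul_add_mul_of_rec (x := fun k => L (a + k * d)) hrec k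

theorem exists_pqLucas_add_two_mul_iff_of_even (hp : 0 < p) (hq : 0 < q) {d : ℕ} (hd : Even d)
    (a : ℕ) : (∃ α β : ℕ, L (a + 2 * d) = α * L a + β * L (a + d)) ↔
      L a / (L a).gcd (L (a + d)) ≤ L d :=
  exists_eq_mul_add_mul_iff (pqLucas_pos hp a) (pqLucas_pos hp _) (pow_pos hq d)
    (pqLucas_add_two_mul_of_even hd a) (pow_mul_pqLucas_le d a)

theorem exists_pqLucas_add_mul_of_even (hp : 0 < p) (hq : 0 < q) {d : ℕ} (hd : Even d)
    (hd₀ : 0 < d) {a : ℕ} (h : ∃ α β : ℕ, L (a + 2 * d) = α * L a + β * L (a + d))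
    {k : ℕ} (hk : 2 ≤ k) : ∃ α β : ℕ, L (a + k * d) = α * L a + β * L (a + d) := by
  rcases hk.eq_or_lt with rfl | hk₃
  · exact h
  refine exists_eq_mul_add_mul_of_gcd_dvd (pqLucas_pos hp a)
    (dvd_pqLucas_add_mul (Nat.gcd_dvd_left _ _) (Nat.gcd_dvd_right _ _) k) ?_
  calc L a / (L a).gcd (L (a + d)) * L (a + d) ≤ L d * L (a + d) :=
        Nat.mul_le_mul_right _ ((exists_pqLucas_add_two_mul_iff_of_even hp hq hd a).mp h)
    _ ≤ L (a + k * d) := pqLucas_mul_le hp hd₀ hk₃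

end PQSequences

theorem stmt17_general (p q : ℕ) (hp : 0 < p) (hq : 0 < q) (hpq : Nat.gcd p q = 1)
    (a d : ℕ) (hd : 0 < d) (n : ℕ)
    (D : ℕ → ℕ) (hD : ∀ i, 1 ≤ i → D i = pqLucas p q (a + (i - 1) * d)) :
    ((∃ α β : ℕ, D 3 = α * D 1 + β * D 2) ↔
        (Odd d ∨ Nat.lcm (D 1) (pqFib p q d) ≤ pqFib p q (2 * d))) ∧
      ((∃ α β : ℕ, D 3 = α * D 1 + β * D 2) →
        ∀ i, 3 ≤ i → i ≤ n → ∃ α β : ℕ, D i = α * D 1 + β * D 2) := by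
  have hD₁ : D 1 = pqLucas p q a := by simpa using hD 1 le_rfl
  have hD₂ : D 2 = pqLucas p q (a + d) := by simpa using hD 2 one_le_two
  have hD₃ : D 3 = pqLucas p q (a + 2 * d) := hD 3 (by norm_num)
  have hDi (i : ℕ) (hi : 3 ≤ i) : D i = pqLucas p q (a + (i - 1) * d) := hD i (by omega)
  rw [hD₁, hD₂, hD₃]
  rcases Nat.even_or_odd d with heven | hodd
  · refine ⟨?_, fun h i hi _ => ?_⟩
    · rw [exists_pqLucas_add_two_mul_iff_of_even hp hq heven,
        gcd_pqLucas_add_eq_gcd_pqFib hp hpq heven hd, lcm_pqLucas_pqFib_le_iff hp hd]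
      exact (or_iff_right (Nat.not_odd_iff_even.mpr heven)).symm
    · rw [hDi i hi]
      exact exists_pqLucas_add_mul_of_even hp hq heven hd h (by omega)
  · refine ⟨iff_of_true (exists_pqLucas_add_mul_of_odd hodd a 2) (Or.inl hodd), ?_⟩
    intro _ i hi _
    rw [hDi i hi]
    exact exists_pqLucas_add_mul_of_odd hodd a (i - 1)

/-- With `d_i = L_{a + (i−1)·d}` for `1 ≤ i ≤ n` in the
`(p,q)`-Lucas sequence and `n ≥ 3`, `d₃ ∈ ℕd₁ + ℕd₂` iff `d` is odd or
`F_{2d} ≥ lcm(d₁, F_d)`; moreover, if `d₃ ∈ ℕd₁ + ℕd₂`, then `d_i ∈ ℕd₁ + ℕd₂`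
for every `3 ≤ i ≤ n`. -/
theorem stmt17 (p q : ℕ) (hp : 0 < p) (hq : 0 < q) (hpq : Nat.gcd p q = 1)
    (a d : ℕ) (ha : 0 < a) (hd : 0 < d) (n : ℕ) (hn : 3 ≤ n)
    (D : ℕ → ℕ) (hD : ∀ i, 1 ≤ i → D i = pqLucas p q (a + (i - 1) * d)) :
    ((∃ α β : ℕ, D 3 = α * D 1 + β * D 2) ↔
        (Odd d ∨ Nat.lcm (D 1) (pqFib p q d) ≤ pqFib p q (2 * d))) ∧
      ((∃ α β : ℕ, D 3 = α * D 1 + β * D 2) →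
        ∀ i, 3 ≤ i → i ≤ n → ∃ α β : ℕ, D i = α * D 1 + β * D 2) :=
  stmt17_general p q hp hq hpq a d hd n D hD
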